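/- arXiv:1701.01013 — 4 statements merged into one kernel-verified Lean document; each statement's English description precedes it below -/
import Mathlib

section
/- (Interpolation criterion) Let (E₀, E₁) be an interpolation couple of Banach spaces, F a Banach space, and 0 < θ < 1. A linear map L : E₀ ∩ E₁ → F extends to a bounded operator L : (E₀,E₁)_{θ,1} → F if and only if there exists C > 0 such that ‖Lu‖_F ≤ C ‖u‖_{E₀}^{1-θ} ‖u‖_{E₁}^{θ} for all u ∈ E₀ ∩ E₁. -/
/-!
Forward direction: `K(t, u) ≤ min (n₀ u) (t n₁ u)`, and splitting the integral at
`t = n₀ u / n₁ u` gives `∫ t^{-θ} K(t, u) dt/t ≤ ((1-θ)⁻¹ + θ⁻¹) n₀(u)^{1-θ} n₁(u)^θ`.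

Converse: on the dyadic grid `tᵢ = 2ⁱ s`, `i ≤ N`, pick near-optimal decompositions
`u = aᵢ + (u - aᵢ)` for `K(tᵢ, u)`, except `a₀ = 0` and `a_N = u`. Then `u` telescopes as
`∑ (aᵢ₊₁ - aᵢ)`, and `aᵢ₊₁ - aᵢ = (u - aᵢ) - (u - aᵢ₊₁)` lies in `E₀ ∩ E₁` with its two norms
bounded by the costs at `tᵢ` and `tᵢ₊₁` (the second one divided by `tᵢ`). The hypothesis
turns this into a bound of `‖L u‖` by a dyadic Riemann sum of the `K`-integral, plus two end
terms `n₁(u) s^{1-θ}` and `n₀(u) (2^N s)^{-θ}` that vanish as `s → 0`, `2^N s → ∞`.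
-/

open MeasureTheory Set Filter Topology Finset

section KFunctional

variable {X : Type*} [AddCommGroup X] [Module ℝ X]

structure IsSeminormOn (E : Submodule ℝ X) (n : X → ℝ) : Prop where
  nonneg : ∀ u, 0 ≤ n u
  add_le : ∀ u v, u ∈ E → v ∈ E → n (u + v) ≤ n u + n v
  smul_eq : ∀ (c : ℝ) u, u ∈ E → n (c • u) = |c| * n u

namespace IsSeminormOn

variable {E : Submodule ℝ X} {n : X → ℝ}

theorem map_zero (hn : IsSeminormOn E n) : n 0 = 0 := by
  simpa using hn.smul_eq 0 0 E.zero_mem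

theorem sub_le (hn : IsSeminormOn E n) {x y : X} (hx : x ∈ E) (hy : y ∈ E) :
    n (x - y) ≤ n x + n y := by
  have hneg : n (-y) = n y := by simpa using hn.smul_eq (-1) y hy
  rw [sub_eq_add_neg, ← hneg]
  exact hn.add_le x (-y) hx (E.neg_mem hy)

end IsSeminormOn

noncomputable def kFunctional (E₀ E₁ : Submodule ℝ X) (n₀ n₁ : X → ℝ) (t : ℝ) (u : X) : ℝ :=
  sInf {r : ℝ | ∃ u₀ ∈ E₀, ∃ u₁ ∈ E₁, u = u₀ + u₁ ∧ r = n₀ u₀ + t * n₁ u₁}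

variable {E₀ E₁ : Submodule ℝ X} {n₀ n₁ : X → ℝ}

theorem kFunctional_nonneg (hn₀ : IsSeminormOn E₀ n₀) (hn₁ : IsSeminormOn E₁ n₁) {t : ℝ}
    (ht : 0 ≤ t) (u : X) : 0 ≤ kFunctional E₀ E₁ n₀ n₁ t u :=
  Real.sInf_nonneg <| by
    rintro r ⟨a, -, b, -, -, rfl⟩
    exact add_nonneg (hn₀.nonneg a) (mul_nonneg ht (hn₁.nonneg b))

theorem kFunctional_le (hn₀ : IsSeminormOn E₀ n₀) (hn₁ : IsSeminormOn E₁ n₁) {t : ℝ}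
    (ht : 0 ≤ t) {u a b : X} (ha : a ∈ E₀) (hb : b ∈ E₁) (hab : u = a + b) :
    kFunctional E₀ E₁ n₀ n₁ t u ≤ n₀ a + t * n₁ b := by
  refine csInf_le ⟨0, ?_⟩ ⟨a, ha, b, hb, hab, rfl⟩
  rintro r ⟨a, -, b, -, -, rfl⟩
  exact add_nonneg (hn₀.nonneg a) (mul_nonneg ht (hn₁.nonneg b))

theorem kFunctional_le_left (hn₀ : IsSeminormOn E₀ n₀) (hn₁ : IsSeminormOn E₁ n₁) {t : ℝ}
    (ht : 0 ≤ t) {u : X} (hu : u ∈ E₀) : kFunctional E₀ E₁ n₀ n₁ t u ≤ n₀ u := by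
  simpa [hn₁.map_zero] using kFunctional_le hn₀ hn₁ ht hu E₁.zero_mem (add_zero u).symm

theorem kFunctional_le_right (hn₀ : IsSeminormOn E₀ n₀) (hn₁ : IsSeminormOn E₁ n₁) {t : ℝ}
    (ht : 0 ≤ t) {u : X} (hu : u ∈ E₁) : kFunctional E₀ E₁ n₀ n₁ t u ≤ t * n₁ u := by
  simpa [hn₀.map_zero] using kFunctional_le hn₀ hn₁ ht E₀.zero_mem hu (zero_add u).symm

theorem monotoneOn_kFunctional (hn₀ : IsSeminormOn E₀ n₀) (hn₁ : IsSeminormOn E₁ n₁) (u : X) :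
    MonotoneOn (fun t => kFunctional E₀ E₁ n₀ n₁ t u) (Ici 0) := by
  intro s hs t _ hst
  by_cases hu : ∃ a ∈ E₀, ∃ b ∈ E₁, u = a + b
  · obtain ⟨a, ha, b, hb, hab⟩ := hu
    refine le_csInf ⟨_, a, ha, b, hb, hab, rfl⟩ ?_
    rintro r ⟨a, ha, b, hb, hab, rfl⟩
    exact (kFunctional_le hn₀ hn₁ hs ha hb hab).trans (by gcongr; exact hn₁.nonneg b)
  · have hempty : ∀ t : ℝ,
        {r : ℝ | ∃ u₀ ∈ E₀, ∃ u₁ ∈ E₁, u = u₀ + u₁ ∧ r = n₀ u₀ + t * n₁ u₁} = ∅ :=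
      fun t => eq_empty_of_forall_notMem <| by
        rintro _ ⟨a, ha, b, hb, hab, -⟩
        exact hu ⟨a, ha, b, hb, hab⟩
    simp only [kFunctional, hempty, Real.sInf_empty, le_refl]

theorem exists_decomposition_lt_kFunctional_add {u : X} (hu : u ∈ E₀) (t : ℝ) {δ : ℝ}
    (hδ : 0 < δ) :
    ∃ a ∈ E₀, ∃ b ∈ E₁, u = a + b ∧ n₀ a + t * n₁ b < kFunctional E₀ E₁ n₀ n₁ t u + δ := by
  have hlt := lt_add_of_pos_right (kFunctional E₀ E₁ n₀ n₁ t u) hδ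
  rw [kFunctional] at hlt
  obtain ⟨r, ⟨a, ha, b, hb, hab, rfl⟩, hr⟩ :=
    exists_lt_of_csInf_lt (by exact ⟨_, u, hu, 0, E₁.zero_mem, (add_zero u).symm, rfl⟩) hlt
  exact ⟨a, ha, b, hb, hab, hr⟩

end KFunctional

section WeightedIntegral

variable {f : ℝ → ℝ} {θ A B : ℝ}

theorem rpow_neg_le_two_mul_rpow_neg {t : ℝ} (ht : 0 < t) (hθ1 : θ ≤ 1) :
    t ^ (-θ) ≤ 2 * (2 * t) ^ (-θ) := by
  rw [Real.mul_rpow zero_le_two ht.le, ← mul_assoc]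
  refine le_mul_of_one_le_left (by positivity) ?_
  calc (1 : ℝ) = 2 * 2 ^ (-1 : ℝ) := by norm_num
    _ ≤ 2 * 2 ^ (-θ) := by gcongr; linarith

theorem rpow_one_sub_mul_rpow_le {x y P t : ℝ} (hθ0 : 0 ≤ θ) (hθ1 : θ ≤ 1) (hx : 0 ≤ x)
    (hy : 0 ≤ y) (ht : 0 < t) (hxP : x ≤ P) (hyP : y ≤ P / t) :
    x ^ (1 - θ) * y ^ θ ≤ P * t ^ (-θ) := by
  have hP : 0 ≤ P := hx.trans hxP
  calc x ^ (1 - θ) * y ^ θ ≤ P ^ (1 - θ) * (P / t) ^ θ := by gcongr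
    _ = P * t ^ (-θ) := by
      rw [Real.div_rpow hP ht.le, Real.rpow_neg ht.le, mul_div_assoc',
        ← Real.rpow_add' hP (by simp), sub_add_cancel, Real.rpow_one, div_eq_mul_inv]

theorem rpow_neg_mul_div_le_of_le_mul {t y : ℝ} (ht : 0 < t) (hy : y ≤ t * B) :
    t ^ (-θ) * y / t ≤ B * t ^ (-θ) := by
  rw [div_le_iff₀ ht]
  calc t ^ (-θ) * y ≤ t ^ (-θ) * (t * B) := by gcongr
    _ = B * t ^ (-θ) * t := by ring

theorem rpow_neg_mul_div_le_of_le {t y : ℝ} (ht : 0 < t) (hy : y ≤ A) :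
    t ^ (-θ) * y / t ≤ A * t ^ (-θ - 1) := by
  rw [Real.rpow_sub_one ht.ne']
  calc t ^ (-θ) * y / t ≤ t ^ (-θ) * A / t := by gcongr
    _ = A * (t ^ (-θ) / t) := by ring

theorem MonotoneOn.aestronglyMeasurable_rpow_neg_mul_div (hf : MonotoneOn f (Ioi 0)) (θ : ℝ) :
    AEStronglyMeasurable (fun t => t ^ (-θ) * f t / t) (volume.restrict (Ioi 0)) :=
  (((measurable_id.pow_const (-θ)).aemeasurable.mul
    (aemeasurable_restrict_of_monotoneOn measurableSet_Ioi hf)).div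
    measurable_id.aemeasurable).aestronglyMeasurable

theorem integrableOn_rpow_neg_mul_div (hf : MonotoneOn f (Ioi 0)) (hf0 : ∀ t > 0, 0 ≤ f t)
    (hA : ∀ t > 0, f t ≤ A) (hB : ∀ t > 0, f t ≤ t * B) (hθ0 : 0 < θ) (hθ1 : θ < 1) :
    IntegrableOn (fun t => t ^ (-θ) * f t / t) (Ioi 0) := by
  have hmeas := hf.aestronglyMeasurable_rpow_neg_mul_div θ
  have hnorm : ∀ t > 0, ‖t ^ (-θ) * f t / t‖ = t ^ (-θ) * f t / t := fun t ht =>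
    Real.norm_of_nonneg (div_nonneg (mul_nonneg (by positivity) (hf0 t ht)) ht.le)
  rw [← Ioc_union_Ioi_eq_Ioi zero_le_one]
  refine IntegrableOn.union ?_ ?_
  · refine Integrable.mono'
      ((intervalIntegral.intervalIntegrable_rpow' (a := 0) (b := 1)
        (by linarith : (-1 : ℝ) < -θ)).1.const_mul B)
      (hmeas.mono_set Ioc_subset_Ioi_self)
      ((ae_restrict_iff' measurableSet_Ioc).2 (ae_of_all _ fun t ht => ?_))
    rw [hnorm t ht.1]
    exact rpow_neg_mul_div_le_of_le_mul ht.1 (hB t ht.1)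
  · refine Integrable.mono'
      ((integrableOn_Ioi_rpow_of_lt (by linarith : -θ - 1 < -1) one_pos).const_mul A)
      (hmeas.mono_set (Ioi_subset_Ioi zero_le_one))
      ((ae_restrict_iff' measurableSet_Ioi).2 (ae_of_all _ fun t ht => ?_))
    have ht0 : (0 : ℝ) < t := one_pos.trans ht
    rw [hnorm t ht0]
    exact rpow_neg_mul_div_le_of_le ht0 (hA t ht0)

theorem setIntegral_Ioc_rpow_neg_mul_div_le {T : ℝ} (hT : 0 < T)
    (hint : IntegrableOn (fun t => t ^ (-θ) * f t / t) (Ioc 0 T)) (hB : ∀ t > 0, f t ≤ t * B)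
    (hθ1 : θ < 1) : ∫ t in Ioc 0 T, t ^ (-θ) * f t / t ≤ B * T ^ (1 - θ) / (1 - θ) := by
  calc ∫ t in Ioc 0 T, t ^ (-θ) * f t / t ≤ ∫ t in Ioc 0 T, B * t ^ (-θ) :=
        setIntegral_mono_on hint
          ((intervalIntegral.intervalIntegrable_rpow' (by linarith : (-1 : ℝ) < -θ)).1.const_mul B)
          measurableSet_Ioc fun t ht => rpow_neg_mul_div_le_of_le_mul ht.1 (hB t ht.1)
    _ = B * T ^ (1 - θ) / (1 - θ) := by
        rw [integral_const_mul, ← intervalIntegral.integral_of_le hT.le,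
          integral_rpow (Or.inl (by linarith)), Real.zero_rpow (by linarith), neg_add_eq_sub]
        ring

theorem setIntegral_Ioi_rpow_neg_mul_div_le {T : ℝ} (hT : 0 < T)
    (hint : IntegrableOn (fun t => t ^ (-θ) * f t / t) (Ioi T)) (hA : ∀ t > 0, f t ≤ A)
    (hθ0 : 0 < θ) : ∫ t in Ioi T, t ^ (-θ) * f t / t ≤ A * T ^ (-θ) / θ := by
  calc ∫ t in Ioi T, t ^ (-θ) * f t / t ≤ ∫ t in Ioi T, A * t ^ (-θ - 1) :=
        setIntegral_mono_on hint
          ((integrableOn_Ioi_rpow_of_lt (by linarith : -θ - 1 < -1) hT).const_mul A)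
          measurableSet_Ioi fun t ht => rpow_neg_mul_div_le_of_le (hT.trans ht) (hA t (hT.trans ht))
    _ = A * T ^ (-θ) / θ := by
        rw [integral_const_mul, integral_Ioi_rpow_of_lt (by linarith) hT, sub_add_cancel]
        field_simp

theorem setIntegral_rpow_neg_mul_div_le (hf : MonotoneOn f (Ioi 0)) (hf0 : ∀ t > 0, 0 ≤ f t)
    (hA : ∀ t > 0, f t ≤ A) (hB : ∀ t > 0, f t ≤ t * B) (hθ0 : 0 < θ) (hθ1 : θ < 1) :
    ∫ t in Ioi 0, t ^ (-θ) * f t / t ≤ ((1 - θ)⁻¹ + θ⁻¹) * (A ^ (1 - θ) * B ^ θ) := by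
  have hθ1' : 0 < 1 - θ := sub_pos.2 hθ1
  by_cases hAB : 0 < A ∧ 0 < B
  · obtain ⟨hA0, hB0⟩ := hAB
    have hint := integrableOn_rpow_neg_mul_div hf hf0 hA hB hθ0 hθ1
    set T := A / B
    have hT : 0 < T := div_pos hA0 hB0
    have hB_T : B * T ^ (1 - θ) = A ^ (1 - θ) * B ^ θ := by
      rw [Real.div_rpow hA0.le hB0.le, Real.rpow_sub hB0, Real.rpow_one]
      field_simp
    have hA_T : A * T ^ (-θ) = A ^ (1 - θ) * B ^ θ := by
      rw [Real.div_rpow hA0.le hB0.le, Real.rpow_neg hA0.le, Real.rpow_neg hB0.le,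
        Real.rpow_sub hA0, Real.rpow_one]
      field_simp
    rw [← Ioc_union_Ioi_eq_Ioi hT.le, setIntegral_union (Ioc_disjoint_Ioi le_rfl) measurableSet_Ioi
      (hint.mono_set Ioc_subset_Ioi_self) (hint.mono_set (Ioi_subset_Ioi hT.le))]
    calc (∫ t in Ioc 0 T, t ^ (-θ) * f t / t) + ∫ t in Ioi T, t ^ (-θ) * f t / t
        ≤ B * T ^ (1 - θ) / (1 - θ) + A * T ^ (-θ) / θ :=
          add_le_add
            (setIntegral_Ioc_rpow_neg_mul_div_le hT (hint.mono_set Ioc_subset_Ioi_self) hB hθ1)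
            (setIntegral_Ioi_rpow_neg_mul_div_le hT (hint.mono_set (Ioi_subset_Ioi hT.le)) hA hθ0)
      _ = ((1 - θ)⁻¹ + θ⁻¹) * (A ^ (1 - θ) * B ^ θ) := by rw [hB_T, hA_T]; ring
  · have hf_zero : ∀ t ∈ Ioi (0 : ℝ), t ^ (-θ) * f t / t = 0 := by
      intro t ht
      have : f t = 0 := by
        rw [not_and_or, not_lt, not_lt] at hAB
        rcases hAB with hA0 | hB0
        · exact le_antisymm ((hA t ht).trans hA0) (hf0 t ht)
        · exact le_antisymm ((hB t ht).trans (mul_nonpos_of_nonneg_of_nonpos (le_of_lt ht) hB0))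
            (hf0 t ht)
      simp [this]
    rw [setIntegral_eq_zero_of_forall_eq_zero hf_zero]
    have hA0 : 0 ≤ A := (hf0 1 one_pos).trans (hA 1 one_pos)
    have hB0 : 0 ≤ B := by simpa using (hf0 1 one_pos).trans (hB 1 one_pos)
    positivity

theorem mul_rpow_neg_le_four_mul_setIntegral (hf : MonotoneOn f (Ioi 0))
    (hf0 : ∀ t > 0, 0 ≤ f t) (hθ0 : 0 ≤ θ) (hθ1 : θ ≤ 1) {s : ℝ} (hs : 0 < s)
    (hint : IntegrableOn (fun t => t ^ (-θ) * f t / t) (Ioc s (2 * s))) :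
    f s * s ^ (-θ) ≤ 4 * ∫ t in Ioc s (2 * s), t ^ (-θ) * f t / t := by
  have hlow : ∀ t ∈ Ioc s (2 * s), f s * s ^ (-θ) / (4 * s) ≤ t ^ (-θ) * f t / t := by
    rintro t ⟨hst, ht2⟩
    have ht : 0 < t := hs.trans hst
    have hfs := hf0 s hs
    calc f s * s ^ (-θ) / (4 * s) ≤ f s * (2 * (2 * s) ^ (-θ)) / (4 * s) := by
          gcongr; exact rpow_neg_le_two_mul_rpow_neg hs hθ1
      _ = (2 * s) ^ (-θ) * f s / (2 * s) := by field_simp; ring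
      _ ≤ t ^ (-θ) * f t / t :=
          div_le_div₀ (mul_nonneg (by positivity) (hf0 t ht))
            (mul_le_mul (Real.rpow_le_rpow_of_nonpos ht ht2 (neg_nonpos.2 hθ0)) (hf hs ht hst.le)
              hfs (by positivity)) ht ht2
  calc f s * s ^ (-θ) = 4 * ∫ _ in Ioc s (2 * s), f s * s ^ (-θ) / (4 * s) := by
        rw [setIntegral_const, Real.volume_real_Ioc_of_le (by linarith), smul_eq_mul]
        field_simp; ring
    _ ≤ 4 * ∫ t in Ioc s (2 * s), t ^ (-θ) * f t / t :=
        mul_le_mul_of_nonneg_left (setIntegral_mono_on (integrableOn_const measure_Ioc_lt_top.ne)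
          hint measurableSet_Ioc hlow) (by norm_num)

theorem sum_setIntegral_Ioc_le_setIntegral_Ioi {g : ℝ → ℝ} (hg0 : ∀ t > 0, 0 ≤ g t)
    (hg : IntegrableOn g (Ioi 0)) {t : ℕ → ℝ} (ht : Monotone t) (ht0 : 0 ≤ t 0) (N : ℕ) :
    ∑ i ∈ range N, ∫ x in Ioc (t i) (t (i + 1)), g x ≤ ∫ x in Ioi 0, g x := by
  have hsub : ∀ i, Ioc (t i) (t (i + 1)) ⊆ Ioi 0 := fun i x hx =>
    (ht0.trans (ht (Nat.zero_le i))).trans_lt hx.1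
  calc ∑ i ∈ range N, ∫ x in Ioc (t i) (t (i + 1)), g x = ∫ x in t 0..t N, g x := by
        rw [← intervalIntegral.sum_integral_adjacent_intervals fun k _ =>
          (intervalIntegrable_iff_integrableOn_Ioc_of_le (ht (Nat.le_succ k))).2
            (hg.mono_set (hsub k))]
        exact sum_congr rfl fun i _ => (intervalIntegral.integral_of_le (ht (Nat.le_succ i))).symm
    _ = ∫ x in Ioc (t 0) (t N), g x := intervalIntegral.integral_of_le (ht (Nat.zero_le N))
    _ ≤ ∫ x in Ioi 0, g x :=
        setIntegral_mono_set hg ((ae_restrict_iff' measurableSet_Ioi).2 (ae_of_all _ hg0))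
          (LE.le.eventuallyLE fun x hx => ht0.trans_lt hx.1)

theorem sum_mul_rpow_neg_le_four_mul_setIntegral (hf : MonotoneOn f (Ioi 0))
    (hf0 : ∀ t > 0, 0 ≤ f t) (hθ0 : 0 ≤ θ) (hθ1 : θ ≤ 1)
    (hint : IntegrableOn (fun t => t ^ (-θ) * f t / t) (Ioi 0)) {s : ℝ} (hs : 0 < s) (N : ℕ) :
    ∑ i ∈ range N, f (2 ^ i * s) * (2 ^ i * s) ^ (-θ) ≤
      4 * ∫ t in Ioi 0, t ^ (-θ) * f t / t := by
  have hgrid : Monotone fun i : ℕ => 2 ^ i * s := fun i j hij => by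
    dsimp only; gcongr; norm_num
  calc ∑ i ∈ range N, f (2 ^ i * s) * (2 ^ i * s) ^ (-θ)
      ≤ ∑ i ∈ range N, 4 * ∫ t in Ioc (2 ^ i * s) (2 ^ (i + 1) * s), t ^ (-θ) * f t / t := by
        refine sum_le_sum fun i _ => ?_
        rw [show (2 : ℝ) ^ (i + 1) * s = 2 * (2 ^ i * s) by ring]
        exact mul_rpow_neg_le_four_mul_setIntegral hf hf0 hθ0 hθ1 (by positivity)
          (hint.mono_set fun x hx => (by positivity : (0 : ℝ) < 2 ^ i * s).trans hx.1)
    _ ≤ 4 * ∫ t in Ioi 0, t ^ (-θ) * f t / t := by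
        rw [← mul_sum]
        gcongr
        exact sum_setIntegral_Ioc_le_setIntegral_Ioi
          (fun t ht => div_nonneg (mul_nonneg (by positivity) (hf0 t ht)) ht.le) hint hgrid
          (by positivity) N

end WeightedIntegral

section Criterion

variable {X : Type*} [AddCommGroup X] [Module ℝ X] {F : Type*} [NormedAddCommGroup F]
  [Module ℝ F] {E₀ E₁ : Submodule ℝ X} {n₀ n₁ : X → ℝ} {θ C : ℝ} {L : X →ₗ[ℝ] F}

theorem norm_map_sub_le (hn₀ : IsSeminormOn E₀ n₀) (hn₁ : IsSeminormOn E₁ n₁) (hθ0 : 0 ≤ θ)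
    (hθ1 : θ ≤ 1) (hC : 0 ≤ C) (hL : ∀ v ∈ E₀ ⊓ E₁, ‖L v‖ ≤ C * n₀ v ^ (1 - θ) * n₁ v ^ θ)
    {u a a' : X} (hu : u ∈ E₁) (ha : a ∈ E₀ ⊓ E₁) (ha' : a' ∈ E₀ ⊓ E₁) {t t' : ℝ} (ht : 0 < t)
    (htt' : t ≤ t') :
    ‖L (a' - a)‖ ≤ C * ((n₀ a + t * n₁ (u - a)) + (n₀ a' + t' * n₁ (u - a'))) * t ^ (-θ) := by
  set P := (n₀ a + t * n₁ (u - a)) + (n₀ a' + t' * n₁ (u - a'))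
  rw [Submodule.mem_inf] at ha ha'
  have hb : u - a ∈ E₁ := E₁.sub_mem hu ha.2
  have hb' : u - a' ∈ E₁ := E₁.sub_mem hu ha'.2
  have hnb := mul_nonneg ht.le (hn₁.nonneg (u - a))
  have hnb' := mul_nonneg (ht.le.trans htt') (hn₁.nonneg (u - a'))
  have h₀ : n₀ (a' - a) ≤ P := by linarith [hn₀.sub_le ha'.1 ha.1]
  have h₁ : n₁ (a' - a) ≤ P / t := by
    rw [show a' - a = (u - a) - (u - a') by abel, le_div_iff₀ ht]
    have := mul_le_mul_of_nonneg_right htt' (hn₁.nonneg (u - a'))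
    nlinarith [hn₁.sub_le hb hb', hn₀.nonneg a, hn₀.nonneg a']
  calc ‖L (a' - a)‖ ≤ C * n₀ (a' - a) ^ (1 - θ) * n₁ (a' - a) ^ θ :=
        hL _ (Submodule.mem_inf.2 ⟨E₀.sub_mem ha'.1 ha.1, E₁.sub_mem ha'.2 ha.2⟩)
    _ ≤ C * (P * t ^ (-θ)) := by
        rw [mul_assoc]
        exact mul_le_mul_of_nonneg_left
          (rpow_one_sub_mul_rpow_le hθ0 hθ1 (hn₀.nonneg _) (hn₁.nonneg _) ht h₀ h₁) hC
    _ = C * P * t ^ (-θ) := by ring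

theorem norm_le_three_mul_sum (hn₀ : IsSeminormOn E₀ n₀) (hn₁ : IsSeminormOn E₁ n₁)
    (hθ0 : 0 ≤ θ) (hθ1 : θ ≤ 1) (hC : 0 ≤ C)
    (hL : ∀ v ∈ E₀ ⊓ E₁, ‖L v‖ ≤ C * n₀ v ^ (1 - θ) * n₁ v ^ θ) {u : X} {a : ℕ → X} {N : ℕ}
    (ha : ∀ i, a i ∈ E₀ ⊓ E₁) (ha0 : a 0 = 0) (haN : a N = u) {s : ℝ} (hs : 0 < s) :
    ‖L u‖ ≤ 3 * C * ∑ i ∈ range (N + 1),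
      (n₀ (a i) + 2 ^ i * s * n₁ (u - a i)) * (2 ^ i * s) ^ (-θ) := by
  set w : ℕ → ℝ := fun i => (n₀ (a i) + 2 ^ i * s * n₁ (u - a i)) * (2 ^ i * s) ^ (-θ)
  have hu : u ∈ E₁ := haN ▸ (Submodule.mem_inf.1 (ha N)).2
  have hw : ∀ i, 0 ≤ w i := fun i => by
    have := hn₀.nonneg (a i); have := hn₁.nonneg (u - a i); positivity
  have hstep : ∀ i, ‖L (a (i + 1) - a i)‖ ≤ C * (w i + 2 * w (i + 1)) := by
    intro i
    have hti : (0 : ℝ) < 2 ^ i * s := by positivity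
    have hnext : (2 : ℝ) ^ (i + 1) * s = 2 * (2 ^ i * s) := by ring
    refine (norm_map_sub_le hn₀ hn₁ hθ0 hθ1 hC hL hu (ha i) (ha (i + 1)) hti
      (t' := 2 ^ (i + 1) * s) (by rw [hnext]; linarith)).trans ?_
    have hc : 0 ≤ n₀ (a (i + 1)) + 2 ^ (i + 1) * s * n₁ (u - a (i + 1)) := by
      have := hn₀.nonneg (a (i + 1)); have := hn₁.nonneg (u - a (i + 1)); positivity
    have := mul_le_mul_of_nonneg_left (rpow_neg_le_two_mul_rpow_neg hti hθ1) hc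
    simp only [w, hnext] at this ⊢
    rw [mul_assoc]
    gcongr
    linarith
  calc ‖L u‖ = ‖∑ i ∈ range N, L (a (i + 1) - a i)‖ := by
        rw [← map_sum, sum_range_sub, haN, ha0, sub_zero]
    _ ≤ ∑ i ∈ range N, ‖L (a (i + 1) - a i)‖ := norm_sum_le _ _
    _ ≤ ∑ i ∈ range N, C * (w i + 2 * w (i + 1)) := sum_le_sum fun i _ => hstep i
    _ ≤ 3 * C * ∑ i ∈ range (N + 1), w i := by
        have h₁ : ∑ i ∈ range N, w i ≤ ∑ i ∈ range (N + 1), w i := by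
          rw [sum_range_succ]; linarith [hw N]
        have h₂ : ∑ i ∈ range N, w (i + 1) ≤ ∑ i ∈ range (N + 1), w i := by
          rw [sum_range_succ']; linarith [hw 0]
        rw [← mul_sum, sum_add_distrib, ← mul_sum, mul_comm 3 C, mul_assoc]
        gcongr
        linarith

theorem integrableOn_kFunctional (hn₀ : IsSeminormOn E₀ n₀) (hn₁ : IsSeminormOn E₁ n₁) {u : X}
    (hu : u ∈ E₀ ⊓ E₁) (hθ0 : 0 < θ) (hθ1 : θ < 1) :
    IntegrableOn (fun t => t ^ (-θ) * kFunctional E₀ E₁ n₀ n₁ t u / t) (Ioi 0) :=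
  integrableOn_rpow_neg_mul_div ((monotoneOn_kFunctional hn₀ hn₁ u).mono Ioi_subset_Ici_self)
    (fun _ ht => kFunctional_nonneg hn₀ hn₁ ht.le u)
    (fun _ ht => kFunctional_le_left hn₀ hn₁ ht.le (Submodule.mem_inf.1 hu).1)
    (fun _ ht => kFunctional_le_right hn₀ hn₁ ht.le (Submodule.mem_inf.1 hu).2) hθ0 hθ1

theorem setIntegral_kFunctional_le (hn₀ : IsSeminormOn E₀ n₀) (hn₁ : IsSeminormOn E₁ n₁)
    {u : X} (hu : u ∈ E₀ ⊓ E₁) (hθ0 : 0 < θ) (hθ1 : θ < 1) :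
    ∫ t in Ioi 0, t ^ (-θ) * kFunctional E₀ E₁ n₀ n₁ t u / t ≤
      ((1 - θ)⁻¹ + θ⁻¹) * (n₀ u ^ (1 - θ) * n₁ u ^ θ) :=
  setIntegral_rpow_neg_mul_div_le ((monotoneOn_kFunctional hn₀ hn₁ u).mono Ioi_subset_Ici_self)
    (fun _ ht => kFunctional_nonneg hn₀ hn₁ ht.le u)
    (fun _ ht => kFunctional_le_left hn₀ hn₁ ht.le (Submodule.mem_inf.1 hu).1)
    (fun _ ht => kFunctional_le_right hn₀ hn₁ ht.le (Submodule.mem_inf.1 hu).2) hθ0 hθ1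

theorem exists_dyadic_decomposition (hn₀ : IsSeminormOn E₀ n₀) (hn₁ : IsSeminormOn E₁ n₁)
    {u : X} (hu : u ∈ E₀ ⊓ E₁) {s : ℝ} (hs : 0 < s) {N : ℕ} (hN : 0 < N) {ε : ℝ} (hε : 0 < ε)
    (θ : ℝ) :
    ∃ a : ℕ → X, (∀ i, a i ∈ E₀ ⊓ E₁) ∧ a 0 = 0 ∧ a N = u ∧ ∀ i ≤ N,
      (n₀ (a i) + 2 ^ i * s * n₁ (u - a i)) * (2 ^ i * s) ^ (-θ) ≤
        kFunctional E₀ E₁ n₀ n₁ (2 ^ i * s) u * (2 ^ i * s) ^ (-θ) + ε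
          + (if i = 0 then n₁ u * s ^ (1 - θ) else 0)
          + (if i = N then n₀ u * (2 ^ N * s) ^ (-θ) else 0) := by
  have hu' := Submodule.mem_inf.1 hu
  choose a ha b hb hab hcost using fun i : ℕ =>
    exists_decomposition_lt_kFunctional_add (n₀ := n₀) (n₁ := n₁) hu'.1 (2 ^ i * s)
      (by positivity : 0 < ε * (2 ^ i * s) ^ θ)
  have hba : ∀ i, b i = u - a i := fun i => by rw [hab i]; abel
  refine ⟨fun i => if i = 0 then 0 else if i = N then u else a i, fun i => ?_, by simp,
    by simp [hN.ne'], fun i hiN => ?_⟩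
  · have hai : a i ∈ E₀ ⊓ E₁ :=
      Submodule.mem_inf.2 ⟨ha i, by simpa [hba i] using E₁.sub_mem hu'.2 (hb i)⟩
    dsimp only
    split_ifs
    exacts [zero_mem _, hu, hai]
  have hti : (0 : ℝ) < 2 ^ i * s := by positivity
  have hK := kFunctional_nonneg hn₀ hn₁ hti.le u
  have hpow : (0 : ℝ) ≤ (2 ^ i * s) ^ (-θ) := by positivity
  rcases Nat.eq_zero_or_pos i with rfl | hi0
  · have : s * n₁ u * s ^ (-θ) = n₁ u * s ^ (1 - θ) := by
      rw [sub_eq_add_neg, Real.rpow_add hs, Real.rpow_one]; ring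
    simp only [hn₀.map_zero, sub_zero, pow_zero, one_mul, zero_add, add_zero, if_pos,
      hN.ne, if_false] at hK hpow ⊢
    linarith [mul_nonneg hK hpow]
  rcases hiN.eq_or_lt with rfl | hiN
  · simp only [sub_self, hn₁.map_zero, mul_zero, add_zero, hi0.ne', if_false, if_pos]
    nlinarith
  · have hcancel : ε * (2 ^ i * s) ^ θ * (2 ^ i * s) ^ (-θ) = ε := by
      rw [Real.rpow_neg hti.le, mul_assoc, mul_inv_cancel₀ (by positivity), mul_one]
    simp only [hi0.ne', hiN.ne, if_false, add_zero, ← hba]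
    nlinarith [mul_le_mul_of_nonneg_right (hcost i).le hpow]

theorem norm_le_of_dyadic_decomposition (hn₀ : IsSeminormOn E₀ n₀) (hn₁ : IsSeminormOn E₁ n₁)
    (hθ0 : 0 < θ) (hθ1 : θ < 1) (hC : 0 ≤ C)
    (hL : ∀ v ∈ E₀ ⊓ E₁, ‖L v‖ ≤ C * n₀ v ^ (1 - θ) * n₁ v ^ θ) {u : X} (hu : u ∈ E₀ ⊓ E₁)
    {s : ℝ} (hs : 0 < s) {N : ℕ} (hN : 0 < N) {ε : ℝ} (hε : 0 < ε) :
    ‖L u‖ ≤ 3 * C * (n₁ u * s ^ (1 - θ) + n₀ u * (2 ^ N * s) ^ (-θ) + (N + 1) * ε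
      + 4 * ∫ t in Ioi 0, t ^ (-θ) * kFunctional E₀ E₁ n₀ n₁ t u / t) := by
  set K := fun t => kFunctional E₀ E₁ n₀ n₁ t u
  obtain ⟨a, ha, ha0, haN, hcost⟩ := exists_dyadic_decomposition hn₀ hn₁ hu hs hN hε θ
  calc ‖L u‖ ≤ 3 * C * ∑ i ∈ range (N + 1),
        (n₀ (a i) + 2 ^ i * s * n₁ (u - a i)) * (2 ^ i * s) ^ (-θ) :=
        norm_le_three_mul_sum hn₀ hn₁ hθ0.le hθ1.le hC hL ha ha0 haN hs
    _ ≤ 3 * C * ∑ i ∈ range (N + 1), (K (2 ^ i * s) * (2 ^ i * s) ^ (-θ) + ε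
          + (if i = 0 then n₁ u * s ^ (1 - θ) else 0)
          + (if i = N then n₀ u * (2 ^ N * s) ^ (-θ) else 0)) := by
        gcongr with i hi
        exact hcost i (Nat.lt_succ_iff.1 (Finset.mem_range.1 hi))
    _ = 3 * C * (n₁ u * s ^ (1 - θ) + n₀ u * (2 ^ N * s) ^ (-θ) + (N + 1) * ε
          + ∑ i ∈ range (N + 1), K (2 ^ i * s) * (2 ^ i * s) ^ (-θ)) := by
        simp only [sum_add_distrib, sum_ite_eq', if_pos (self_mem_range_succ N),
          if_pos (Finset.mem_range.2 N.succ_pos), sum_const, card_range, nsmul_eq_mul]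
        push_cast
        ring
    _ ≤ _ := by
        gcongr
        exact sum_mul_rpow_neg_le_four_mul_setIntegral
          ((monotoneOn_kFunctional hn₀ hn₁ u).mono Ioi_subset_Ici_self)
          (fun _ ht => kFunctional_nonneg hn₀ hn₁ ht.le u) hθ0.le hθ1.le
          (integrableOn_kFunctional hn₀ hn₁ hu hθ0 hθ1) hs (N + 1)

theorem norm_le_mul_setIntegral_kFunctional (hn₀ : IsSeminormOn E₀ n₀)
    (hn₁ : IsSeminormOn E₁ n₁) (hθ0 : 0 < θ) (hθ1 : θ < 1) (hC : 0 ≤ C)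
    (hL : ∀ v ∈ E₀ ⊓ E₁, ‖L v‖ ≤ C * n₀ v ^ (1 - θ) * n₁ v ^ θ) {u : X} (hu : u ∈ E₀ ⊓ E₁) :
    ‖L u‖ ≤ 12 * C * ∫ t in Ioi 0, t ^ (-θ) * kFunctional E₀ E₁ n₀ n₁ t u / t := by
  set I := ∫ t in Ioi 0, t ^ (-θ) * kFunctional E₀ E₁ n₀ n₁ t u / t
  have hlim : Tendsto
      (fun x : ℝ => 3 * C * (n₁ u * x ^ (-(1 - θ)) + n₀ u * x ^ (-θ) + x⁻¹ + 4 * I))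
      atTop (𝓝 (12 * C * I)) := by
    have := ((((tendsto_rpow_neg_atTop (sub_pos.2 hθ1)).const_mul (n₁ u)).add
      ((tendsto_rpow_neg_atTop hθ0).const_mul (n₀ u))).add tendsto_inv_atTop_zero).add_const
      (4 * I)
    convert this.const_mul (3 * C) using 2
    ring
  refine ge_of_tendsto (hlim.comp (tendsto_pow_atTop_atTop_of_one_lt one_lt_two)) ?_
  filter_upwards [eventually_gt_atTop 0] with M hM
  have hx : (0 : ℝ) < 2 ^ M := by positivity
  have hbound := norm_le_of_dyadic_decomposition hn₀ hn₁ hθ0 hθ1 hC hL hu (inv_pos.2 hx)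
    (N := 2 * M) (by omega) (ε := (2 ^ M)⁻¹ / (2 * M + 1)) (by positivity)
  have hslack : ((2 * M : ℕ) + 1 : ℝ) * ((2 ^ M)⁻¹ / (2 * M + 1)) = (2 ^ M)⁻¹ := by
    push_cast; field_simp
  have hright : (2 : ℝ) ^ (2 * M) * (2 ^ M)⁻¹ = 2 ^ M := by
    rw [mul_comm 2 M, pow_mul, sq, mul_inv_cancel_right₀ hx.ne']
  rwa [hslack, hright, Real.inv_rpow hx.le, ← Real.rpow_neg hx.le] at hbound

end Criterion

theorem stmt_7_general {X : Type*} [AddCommGroup X] [Module ℝ X]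
    {F : Type*} [NormedAddCommGroup F] [NormedSpace ℝ F]
    (E₀ E₁ : Submodule ℝ X) (n₀ n₁ : X → ℝ)
    (h₀nonneg : ∀ u, 0 ≤ n₀ u) (h₁nonneg : ∀ u, 0 ≤ n₁ u)
    (h₀add : ∀ u v, u ∈ E₀ → v ∈ E₀ → n₀ (u + v) ≤ n₀ u + n₀ v)
    (h₁add : ∀ u v, u ∈ E₁ → v ∈ E₁ → n₁ (u + v) ≤ n₁ u + n₁ v)
    (h₀smul : ∀ (c : ℝ) u, u ∈ E₀ → n₀ (c • u) = |c| * n₀ u)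
    (h₁smul : ∀ (c : ℝ) u, u ∈ E₁ → n₁ (c • u) = |c| * n₁ u)
    (θ : ℝ) (hθ0 : 0 < θ) (hθ1 : θ < 1)
    (K : ℝ → X → ℝ)
    (hK : ∀ t u, K t u =
      sInf {r : ℝ | ∃ u₀ ∈ E₀, ∃ u₁ ∈ E₁, u = u₀ + u₁ ∧ r = n₀ u₀ + t * n₁ u₁})
    (L : X →ₗ[ℝ] F) :
    (∃ C' : ℝ, 0 < C' ∧ ∀ u ∈ E₀ ⊓ E₁,
        ‖L u‖ ≤ C' * ∫ t in Set.Ioi (0:ℝ), t ^ (-θ) * K t u / t) ↔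
    (∃ C : ℝ, 0 < C ∧ ∀ u ∈ E₀ ⊓ E₁,
        ‖L u‖ ≤ C * n₀ u ^ (1 - θ) * n₁ u ^ θ) := by
  obtain rfl : K = kFunctional E₀ E₁ n₀ n₁ := funext₂ hK
  have hn₀ : IsSeminormOn E₀ n₀ := ⟨h₀nonneg, h₀add, h₀smul⟩
  have hn₁ : IsSeminormOn E₁ n₁ := ⟨h₁nonneg, h₁add, h₁smul⟩
  have hθ1' : 0 < 1 - θ := sub_pos.2 hθ1
  constructor
  · rintro ⟨C', hC', hL⟩
    refine ⟨C' * ((1 - θ)⁻¹ + θ⁻¹), by positivity, fun u hu => ?_⟩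
    calc ‖L u‖ ≤ C' * ∫ t in Ioi 0, t ^ (-θ) * kFunctional E₀ E₁ n₀ n₁ t u / t := hL u hu
      _ ≤ C' * (((1 - θ)⁻¹ + θ⁻¹) * (n₀ u ^ (1 - θ) * n₁ u ^ θ)) :=
          mul_le_mul_of_nonneg_left (setIntegral_kFunctional_le hn₀ hn₁ hu hθ0 hθ1) hC'.le
      _ = C' * ((1 - θ)⁻¹ + θ⁻¹) * n₀ u ^ (1 - θ) * n₁ u ^ θ := by ring
  · rintro ⟨C, hC, hL⟩
    exact ⟨12 * C, by positivity, fun u hu =>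
      norm_le_mul_setIntegral_kFunctional hn₀ hn₁ hθ0 hθ1 hC.le hL hu⟩

/-- interpolation criterion, Tartar Lemma 25.3: for an interpolation couple
`(E₀, E₁)` (two normed subspaces of an ambient vector space `X`, with norms `n₀, n₁`),
a Banach space `F` and `0 < θ < 1`, a linear map `L : E₀ ∩ E₁ → F` extends to a bounded
operator on the real interpolation space `(E₀,E₁)_{θ,1}` (equivalently, is bounded on
`E₀ ∩ E₁` for the `(θ,1)`-norm `u ↦ ∫_0^∞ t^{-θ} K(t,u) dt/t`, `E₀ ∩ E₁` being dense there)
iff `‖Lu‖ ≤ C n₀(u)^{1-θ} n₁(u)^θ` on `E₀ ∩ E₁`. -/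
theorem stmt_7 {X : Type*} [AddCommGroup X] [Module ℝ X]
    {F : Type*} [NormedAddCommGroup F] [NormedSpace ℝ F] [CompleteSpace F]
    (E₀ E₁ : Submodule ℝ X) (n₀ n₁ : X → ℝ)
    (h₀nonneg : ∀ u, 0 ≤ n₀ u) (h₁nonneg : ∀ u, 0 ≤ n₁ u)
    (h₀zero : n₀ 0 = 0) (h₁zero : n₁ 0 = 0)
    (h₀add : ∀ u v, u ∈ E₀ → v ∈ E₀ → n₀ (u + v) ≤ n₀ u + n₀ v)
    (h₁add : ∀ u v, u ∈ E₁ → v ∈ E₁ → n₁ (u + v) ≤ n₁ u + n₁ v)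
    (h₀smul : ∀ (c : ℝ) u, u ∈ E₀ → n₀ (c • u) = |c| * n₀ u)
    (h₁smul : ∀ (c : ℝ) u, u ∈ E₁ → n₁ (c • u) = |c| * n₁ u)
    (θ : ℝ) (hθ0 : 0 < θ) (hθ1 : θ < 1)
    (K : ℝ → X → ℝ)
    (hK : ∀ t u, K t u =
      sInf {r : ℝ | ∃ u₀ ∈ E₀, ∃ u₁ ∈ E₁, u = u₀ + u₁ ∧ r = n₀ u₀ + t * n₁ u₁})
    (L : X →ₗ[ℝ] F) :
    (∃ C' : ℝ, 0 < C' ∧ ∀ u ∈ E₀ ⊓ E₁,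
        ‖L u‖ ≤ C' * ∫ t in Set.Ioi (0:ℝ), t ^ (-θ) * K t u / t) ↔
    (∃ C : ℝ, 0 < C ∧ ∀ u ∈ E₀ ⊓ E₁,
        ‖L u‖ ≤ C * n₀ u ^ (1 - θ) * n₁ u ^ θ) :=
  stmt_7_general E₀ E₁ n₀ n₁ h₀nonneg h₁nonneg h₀add h₁add h₀smul h₁smul θ hθ0 hθ1 K hK L
end

section
/- (Characteristic equation in 1D) Let k̂ : ℂ \ (-∞,0] → ℂ and let z ∈ ℂ \ (-∞,0] with sin(iz) ≠ 0. The boundary value problem z²p − p'' = 0 on (0,1), −p'(0) + z k̂(z) p(0) = 0, p'(1) + z k̂(z) p(1) = 0 has a nonzero solution p if and only if (k̂(z) − i·tan(iz/2)) · (k̂(z) + i·cot(iz/2)) = 0. -/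
/-!
Two solutions of `y'' = V y` have constant Wronskian. Pairing a solution `p` of `p'' = z² p` with
`cosh (z x)` and `sinh (z x)` gives `z p(x) = z p(0) cosh (z x) + p'(0) sinh (z x)`, so the left
boundary condition makes `p` a multiple `p(0) (cosh (z x) + k sinh (z x))`, nonzero iff `p(0) ≠ 0`,
and the right one then holds iff `(1 + k²) sinh z + 2 k cosh z = 0`. With `s = sinh (z/2)` and
`c = cosh (z/2)` this expression is `2 (k c + s) (k s + c)`, while `i tan (iz/2) = -s/c` and
`i cot (iz/2) = c/s` turn the stated product into `(k c + s) (k s + c) / (s c)`.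
-/

open Complex Set

theorem eqOn_Icc_of_hasDerivAt_eq_zero {E : Type*} [NormedAddCommGroup E] [NormedSpace ℝ E]
    {f : ℝ → E} {a b : ℝ} (hab : a < b) (hf : ContinuousOn f (Icc a b))
    (hf' : ∀ x ∈ Ioo a b, HasDerivAt f 0 x) : ∀ x ∈ Icc a b, f x = f a := by
  obtain ⟨c, hc⟩ := nonempty_Ioo.mpr hab
  have hIoo : EqOn f (fun _ => f c) (Ioo a b) := fun x hx =>
    isOpen_Ioo.is_const_of_deriv_eq_zero isPreconnected_Ioo
      (fun y hy => (hf' y hy).differentiableAt.differentiableWithinAt)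
      (fun y hy => (hf' y hy).deriv) hx hc
  have hIcc : EqOn f (fun _ => f c) (Icc a b) :=
    hIoo.of_subset_closure hf continuousOn_const Ioo_subset_Icc_self
      (closure_Ioo hab.ne).symm.subset
  intro x hx
  rw [hIcc hx, hIcc (left_mem_Icc.mpr hab.le)]

theorem wronskian_eq_of_hasDerivWithinAt {a b : ℝ} {V p p' p'' u u' u'' : ℝ → ℂ} (hab : a < b)
    (hp : ∀ x ∈ Icc a b, HasDerivWithinAt p (p' x) (Icc a b) x)
    (hp' : ∀ x ∈ Icc a b, HasDerivWithinAt p' (p'' x) (Icc a b) x)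
    (hpV : ∀ x ∈ Ioo a b, p'' x = V x * p x)
    (hu : ∀ x ∈ Icc a b, HasDerivWithinAt u (u' x) (Icc a b) x)
    (hu' : ∀ x ∈ Icc a b, HasDerivWithinAt u' (u'' x) (Icc a b) x)
    (huV : ∀ x ∈ Ioo a b, u'' x = V x * u x) :
    ∀ x ∈ Icc a b, p' x * u x - p x * u' x = p' a * u a - p a * u' a := by
  have hW : ∀ x ∈ Icc a b, HasDerivWithinAt (fun t => p' t * u t - p t * u' t)
      (p'' x * u x - p x * u'' x) (Icc a b) x := fun x hx =>
    (((hp' x hx).mul (hu x hx)).sub ((hp x hx).mul (hu' x hx))).congr_deriv (by ring)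
  refine eqOn_Icc_of_hasDerivAt_eq_zero hab (fun x hx => (hW x hx).continuousWithinAt)
    fun x hx => ?_
  have hx' := Ioo_subset_Icc_self hx
  convert (hW x hx').hasDerivAt (Icc_mem_nhds hx.1 hx.2) using 1
  rw [hpV x hx, huV x hx]
  ring

theorem hasDerivAt_cosh_mul_ofReal (z : ℂ) (x : ℝ) :
    HasDerivAt (fun t : ℝ => cosh (z * t)) (z * sinh (z * x)) x := by
  simpa [mul_comm] using (((hasDerivAt_id (x : ℂ)).const_mul z).ccosh).comp_ofReal

theorem hasDerivAt_sinh_mul_ofReal (z : ℂ) (x : ℝ) :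
    HasDerivAt (fun t : ℝ => sinh (z * t)) (z * cosh (z * x)) x := by
  simpa [mul_comm] using (((hasDerivAt_id (x : ℂ)).const_mul z).csinh).comp_ofReal

theorem tan_cot_factor_eq_zero_iff {k z : ℂ} (hz : sinh z ≠ 0) :
    (k - I * tan (I * z / 2)) * (k + I * cot (I * z / 2)) = 0 ↔
      (1 + k ^ 2) * sinh z + 2 * k * cosh z = 0 := by
  have hIz : I * z / 2 = z / 2 * I := by ring
  have hsinh : sinh z = 2 * sinh (z / 2) * cosh (z / 2) := by
    rw [← sinh_two_mul]; ring_nf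
  have hcosh : cosh z = cosh (z / 2) ^ 2 + sinh (z / 2) ^ 2 := by
    rw [← cosh_two_mul]; ring_nf
  have hs : sinh (z / 2) ≠ 0 := fun h => hz (by rw [hsinh, h]; ring)
  have hc : cosh (z / 2) ≠ 0 := fun h => hz (by rw [hsinh, h]; ring)
  rw [tan_eq_sin_div_cos, cot_eq_cos_div_sin, hIz, sin_mul_I, cos_mul_I, hsinh, hcosh]
  field_simp
  rw [I_sq]
  constructor <;> intro h
  · linear_combination 2 * h
  · linear_combination h / 2

theorem eq_cosh_add_sinh_of_deriv_deriv_eq {b : ℝ} {z : ℂ} {p p' p'' : ℝ → ℂ} (hb : 0 < b)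
    (hp : ∀ x ∈ Icc 0 b, HasDerivWithinAt p (p' x) (Icc 0 b) x)
    (hp' : ∀ x ∈ Icc 0 b, HasDerivWithinAt p' (p'' x) (Icc 0 b) x)
    (hode : ∀ x ∈ Ioo 0 b, p'' x = z ^ 2 * p x) {x : ℝ} (hx : x ∈ Icc 0 b) :
    z * p x = z * p 0 * cosh (z * x) + p' 0 * sinh (z * x) ∧
      p' x = p' 0 * cosh (z * x) + z * p 0 * sinh (z * x) := by
  have hV : ∀ f : ℝ → ℂ, ∀ x ∈ Ioo 0 b, z * (z * f x) = z ^ 2 * f x := fun _ _ _ => by ring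
  have hWc := wronskian_eq_of_hasDerivWithinAt hb hp hp' hode
    (fun x _ => (hasDerivAt_cosh_mul_ofReal z x).hasDerivWithinAt)
    (fun x _ => ((hasDerivAt_sinh_mul_ofReal z x).const_mul z).hasDerivWithinAt)
    (hV fun t => cosh (z * t)) x hx
  have hWs := wronskian_eq_of_hasDerivWithinAt hb hp hp' hode
    (fun x _ => (hasDerivAt_sinh_mul_ofReal z x).hasDerivWithinAt)
    (fun x _ => ((hasDerivAt_cosh_mul_ofReal z x).const_mul z).hasDerivWithinAt)
    (hV fun t => sinh (z * t)) x hx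
  simp only [ofReal_zero, mul_zero, cosh_zero, sinh_zero, mul_one] at hWc hWs
  have hpyth := cosh_sq_sub_sinh_sq (z * x)
  constructor
  · linear_combination sinh (z * x) * hWc - cosh (z * x) * hWs - z * p x * hpyth
  · linear_combination cosh (z * x) * hWc - sinh (z * x) * hWs - p' x * hpyth

theorem robin_char_eq_zero_of_solution {z k : ℂ} {p p' p'' : ℝ → ℂ} (hz : z ≠ 0)
    (hp : ∀ x ∈ Icc (0 : ℝ) 1, HasDerivWithinAt p (p' x) (Icc 0 1) x)
    (hp' : ∀ x ∈ Icc (0 : ℝ) 1, HasDerivWithinAt p' (p'' x) (Icc 0 1) x)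
    (hode : ∀ x ∈ Ioo (0 : ℝ) 1, p'' x = z ^ 2 * p x)
    (hbc0 : -p' 0 + z * k * p 0 = 0) (hbc1 : p' 1 + z * k * p 1 = 0)
    {x₀ : ℝ} (hx₀ : x₀ ∈ Icc (0 : ℝ) 1) (hpx₀ : p x₀ ≠ 0) :
    (1 + k ^ 2) * sinh z + 2 * k * cosh z = 0 := by
  have hp'0 : p' 0 = z * k * p 0 := by linear_combination -hbc0
  have hp0 : p 0 ≠ 0 := by
    intro h0
    have hx₀rep := (eq_cosh_add_sinh_of_deriv_deriv_eq one_pos hp hp' hode hx₀).1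
    rw [hp'0, h0] at hx₀rep
    exact hpx₀ ((mul_eq_zero.mp (by simpa using hx₀rep)).resolve_left hz)
  obtain ⟨h1, h1'⟩ := eq_cosh_add_sinh_of_deriv_deriv_eq one_pos hp hp' hode
    (right_mem_Icc.mpr zero_le_one)
  simp only [ofReal_one, mul_one] at h1 h1'
  have hchar : z * p 0 * ((1 + k ^ 2) * sinh z + 2 * k * cosh z) = 0 := by
    linear_combination hbc1 - h1' - k * h1 - (cosh z + k * sinh z) * hp'0
  exact (mul_eq_zero.mp hchar).resolve_left (mul_ne_zero hz hp0)

theorem stmt_9_general (khat : ℂ → ℂ) (z : ℂ)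
    (hsin : Complex.sin (Complex.I * z) ≠ 0) :
    (∃ p p' p'' : ℝ → ℂ,
        (∀ x ∈ Set.Icc (0:ℝ) 1, HasDerivWithinAt p (p' x) (Set.Icc 0 1) x) ∧
        (∀ x ∈ Set.Icc (0:ℝ) 1, HasDerivWithinAt p' (p'' x) (Set.Icc 0 1) x) ∧
        (∀ x ∈ Set.Ioo (0:ℝ) 1, z^2 * p x - p'' x = 0) ∧
        (-p' 0 + z * khat z * p 0 = 0) ∧
        (p' 1 + z * khat z * p 1 = 0) ∧
        (∃ x ∈ Set.Icc (0:ℝ) 1, p x ≠ 0)) ↔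
      (khat z - Complex.I * Complex.tan (Complex.I * z / 2)) *
        (khat z + Complex.I * Complex.cot (Complex.I * z / 2)) = 0 := by
  have hsinh : sinh z ≠ 0 := by
    rwa [mul_comm, sin_mul_I, mul_ne_zero_iff_right I_ne_zero] at hsin
  have hz : z ≠ 0 := by rintro rfl; simp at hsinh
  rw [tan_cot_factor_eq_zero_iff hsinh]
  constructor
  · rintro ⟨p, p', p'', hp, hp', hode, hbc0, hbc1, x₀, hx₀, hpx₀⟩
    exact robin_char_eq_zero_of_solution hz hp hp' (fun x hx => (sub_eq_zero.mp (hode x hx)).symm)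
      hbc0 hbc1 hx₀ hpx₀
  · intro hchar
    refine ⟨fun t => cosh (z * t) + khat z * sinh (z * t),
      fun t => z * sinh (z * t) + khat z * (z * cosh (z * t)),
      fun t => z * (z * cosh (z * t)) + khat z * (z * (z * sinh (z * t))),
      fun x _ => ?_, fun x _ => ?_, fun x _ => by ring, ?_, ?_,
      ⟨0, left_mem_Icc.mpr zero_le_one, by simp⟩⟩
    · exact ((hasDerivAt_cosh_mul_ofReal z x).add
        ((hasDerivAt_sinh_mul_ofReal z x).const_mul _)).hasDerivWithinAt
    · exact (((hasDerivAt_sinh_mul_ofReal z x).const_mul z).add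
        (((hasDerivAt_cosh_mul_ofReal z x).const_mul z).const_mul _)).hasDerivWithinAt
    · simp only [ofReal_zero, mul_zero, sinh_zero, cosh_zero, mul_one, zero_add, add_zero]
      ring
    · simp only [ofReal_one, mul_one]
      linear_combination z * hchar

/-- characteristic equation in 1D: for `z ∉ (-∞,0]` with `sin(iz) ≠ 0`, the
boundary value problem `z²p − p'' = 0` on `(0,1)`, `−p'(0) + z k̂(z) p(0) = 0`,
`p'(1) + z k̂(z) p(1) = 0` has a nonzero (twice differentiable on `[0,1]`) solution iff
`(k̂(z) − i tan(iz/2))(k̂(z) + i cot(iz/2)) = 0`. -/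
theorem stmt_9 (khat : ℂ → ℂ) (z : ℂ) (hz : ¬ (z.re ≤ 0 ∧ z.im = 0))
    (hsin : Complex.sin (Complex.I * z) ≠ 0) :
    (∃ p p' p'' : ℝ → ℂ,
        (∀ x ∈ Set.Icc (0:ℝ) 1, HasDerivWithinAt p (p' x) (Set.Icc 0 1) x) ∧
        (∀ x ∈ Set.Icc (0:ℝ) 1, HasDerivWithinAt p' (p'' x) (Set.Icc 0 1) x) ∧
        (∀ x ∈ Set.Ioo (0:ℝ) 1, z^2 * p x - p'' x = 0) ∧
        (-p' 0 + z * khat z * p 0 = 0) ∧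
        (p' 1 + z * khat z * p 1 = 0) ∧
        (∃ x ∈ Set.Icc (0:ℝ) 1, p x ≠ 0)) ↔
      (khat z - Complex.I * Complex.tan (Complex.I * z / 2)) *
        (khat z + Complex.I * Complex.cot (Complex.I * z / 2)) = 0 :=
  stmt_9_general khat z hsin
end

section
/- (Boundary values of spectral clusters on the square, lower bound) Let Q = (0,π)² and let u_{m,n}(x,y) = 2cos(mx)cos(ny) (suitably normalized for m = 0 or n = 0) be the L²-normalized Neumann eigenfunctions with eigenfrequencies λ_{m,n} = √(m²+n²). There is δ₀ > 0 such that for 0 < δ ≤ δ₀ and every L²(Q)-normalized finite linear combination p = Σ a_{m,n} u_{m,n} whose frequencies λ_{m,n} (with a_{m,n} ≠ 0) all lie in an interval of length δ, one has ∫_{∂Q} |p|² dS ≥ c with a constant c > 0 independent of p. -/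
/-!
Write `p = Σ a_q cos(q₁x) cos(q₂y)`. On the pair of edges `x = 0`, `x = π` the traces are
cosine series in `y` whose `n`-th coefficients are `Σ_{q₂ = n} a_q` and `Σ_{q₂ = n} (-1)^{q₁} a_q`;
by Parseval their boundary integral is at least `π a_q²` for every frequency `q` that is alone in its
row `q₂ = n`, and symmetrically for the edges `y = 0`, `y = π` and columns. In a cluster of width
`δ ≤ 1/8` two frequencies `(m, n) ≠ (m', n)` with `n ≤ m` cannot coexist, since
`|m² - m'²| ≥ m + m'` while `|m² - m'²| ≤ δ (√(m²+n²) + √(m'²+n²)) ≤ δ (4m + δ)`. So every frequency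
is alone in its row or in its column, and the boundary integral is at least `π Σ a_q² ≥ 1/π`.
-/

open Real

noncomputable def cosNormSq (n : ℕ) : ℝ := if n = 0 then π else π / 2

lemma half_pi_le_cosNormSq (n : ℕ) : π / 2 ≤ cosNormSq n := by
  unfold cosNormSq; split_ifs <;> linarith [pi_pos]

lemma cosNormSq_le_pi (n : ℕ) : cosNormSq n ≤ π := by
  unfold cosNormSq; split_ifs <;> linarith [pi_pos]

lemma cosNormSq_nonneg (n : ℕ) : 0 ≤ cosNormSq n := by
  linarith [half_pi_le_cosNormSq n, pi_pos]

lemma integral_cos_int_mul (c : ℤ) :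
    ∫ x in (0:ℝ)..π, cos (c * x) = if c = 0 then π else 0 := by
  rcases eq_or_ne c 0 with rfl | hc
  · simp
  · rw [if_neg hc, intervalIntegral.integral_comp_mul_left cos (Int.cast_ne_zero.mpr hc)]
    simp [integral_cos, sin_int_mul_pi]

lemma integral_cos_mul_cos (m k : ℕ) :
    ∫ x in (0:ℝ)..π, cos (m * x) * cos (k * x) = if m = k then cosNormSq m else 0 := by
  have h : ∀ x : ℝ, cos (m * x) * cos (k * x)
      = (cos (((m - k : ℤ) : ℝ) * x) + cos (((m + k : ℤ) : ℝ) * x)) / 2 := by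
    intro x
    push_cast
    rw [sub_mul, add_mul, cos_sub, cos_add]
    ring
  simp_rw [h]
  rw [intervalIntegral.integral_div, intervalIntegral.integral_add
    (Continuous.intervalIntegrable (by fun_prop) _ _) (Continuous.intervalIntegrable (by fun_prop) _ _),
    integral_cos_int_mul, integral_cos_int_mul, cosNormSq]
  split_ifs <;> first | omega | ring

lemma integral_sq_sum_cos (N : Finset ℕ) (c : ℕ → ℝ) :
    ∫ y in (0:ℝ)..π, (∑ n ∈ N, c n * cos (n * y)) ^ 2 = ∑ n ∈ N, c n ^ 2 * cosNormSq n := by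
  simp_rw [sq, Finset.sum_mul_sum]
  rw [intervalIntegral.integral_finsetSum fun n _ => Continuous.intervalIntegrable (by fun_prop) _ _]
  refine Finset.sum_congr rfl fun n hn => ?_
  rw [intervalIntegral.integral_finsetSum fun k _ => Continuous.intervalIntegrable (by fun_prop) _ _]
  simp_rw [mul_mul_mul_comm, intervalIntegral.integral_const_mul, integral_cos_mul_cos]
  simp [hn]

lemma sum_filter_eq_of_unique {ι κ : Type*} [DecidableEq κ] {T : Finset ι} {k : ι → κ} {i : ι}
    (hi : i ∈ T) (h : ∀ j ∈ T, k j = k i → j = i) (b : ι → ℝ) :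
    ∑ j ∈ T with k j = k i, b j = b i :=
  Finset.sum_eq_single_of_mem i (Finset.mem_filter.mpr ⟨hi, rfl⟩) fun j hj hji =>
    (hji (h j (Finset.mem_filter.mp hj).1 (Finset.mem_filter.mp hj).2)).elim

lemma integral_sq_sum_cos_eq_sum_fiber {ι : Type*} (T : Finset ι) (k : ι → ℕ) (b : ι → ℝ) :
    ∫ y in (0:ℝ)..π, (∑ i ∈ T, b i * cos (k i * y)) ^ 2
      = ∑ n ∈ T.image k, (∑ i ∈ T with k i = n, b i) ^ 2 * cosNormSq n := by
  have h : ∀ y : ℝ, ∑ i ∈ T, b i * cos (k i * y)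
      = ∑ n ∈ T.image k, (∑ i ∈ T with k i = n, b i) * cos (n * y) := by
    intro y
    rw [← Finset.sum_fiberwise_of_maps_to fun i hi => Finset.mem_image_of_mem k hi]
    refine Finset.sum_congr rfl fun n _ => ?_
    rw [Finset.sum_mul]
    exact Finset.sum_congr rfl fun i hi => by rw [(Finset.mem_filter.mp hi).2]
  simp_rw [h]
  exact integral_sq_sum_cos _ _

lemma integral_sq_sum_cos_of_injOn {ι : Type*} {T : Finset ι} {k : ι → ℕ} (hk : Set.InjOn k T)
    (b : ι → ℝ) :
    ∫ y in (0:ℝ)..π, (∑ i ∈ T, b i * cos (k i * y)) ^ 2 = ∑ i ∈ T, b i ^ 2 * cosNormSq (k i) := by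
  rw [integral_sq_sum_cos_eq_sum_fiber, Finset.sum_image hk]
  exact Finset.sum_congr rfl fun i hi => by
    rw [sum_filter_eq_of_unique hi fun j hj hji => hk hj hi hji]

lemma sum_sq_le_sum_fiber_sq {ι κ : Type*} [DecidableEq κ] {S T : Finset ι} {k : ι → κ}
    (hST : S ⊆ T) (hS : ∀ i ∈ S, ∀ j ∈ T, k j = k i → j = i) (b : ι → ℝ) {w : κ → ℝ}
    (hw : ∀ n, 0 ≤ w n) :
    ∑ i ∈ S, b i ^ 2 * w (k i) ≤ ∑ n ∈ T.image k, (∑ i ∈ T with k i = n, b i) ^ 2 * w n := by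
  have hk : Set.InjOn k S := fun i hi j hj hij => (hS i hi j (hST hj) hij.symm).symm
  calc ∑ i ∈ S, b i ^ 2 * w (k i)
      = ∑ n ∈ S.image k, (∑ i ∈ T with k i = n, b i) ^ 2 * w n := by
        rw [Finset.sum_image hk]
        exact Finset.sum_congr rfl fun i hi => by rw [sum_filter_eq_of_unique (hST hi) (hS i hi)]
    _ ≤ _ := Finset.sum_le_sum_of_subset_of_nonneg (Finset.image_subset_image hST)
        fun n _ _ => mul_nonneg (sq_nonneg _) (hw n)

lemma sum_sq_mul_cosNormSq_le_integral {ι : Type*} {S T : Finset ι} {k : ι → ℕ} (hST : S ⊆ T)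
    (hS : ∀ i ∈ S, ∀ j ∈ T, k j = k i → j = i) (b : ι → ℝ) :
    ∑ i ∈ S, b i ^ 2 * cosNormSq (k i) ≤ ∫ y in (0:ℝ)..π, (∑ i ∈ T, b i * cos (k i * y)) ^ 2 := by
  rw [integral_sq_sum_cos_eq_sum_fiber]
  exact sum_sq_le_sum_fiber_sq hST hS b cosNormSq_nonneg

lemma pi_mul_sum_sq_le_integral_opposite_edges {ι : Type*} {S T : Finset ι} {k : ι → ℕ}
    (hST : S ⊆ T) (hS : ∀ i ∈ S, ∀ j ∈ T, k j = k i → j = i) (l : ι → ℕ) (a : ι → ℝ) :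
    π * ∑ i ∈ S, a i ^ 2 ≤ ∫ y in (0:ℝ)..π, (∑ i ∈ T, a i * cos (l i * 0) * cos (k i * y)) ^ 2
      + (∑ i ∈ T, a i * cos (l i * π) * cos (k i * y)) ^ 2 := by
  rw [intervalIntegral.integral_add (Continuous.intervalIntegrable (by fun_prop) _ _)
    (Continuous.intervalIntegrable (by fun_prop) _ _)]
  have h0 := sum_sq_mul_cosNormSq_le_integral hST hS fun i => a i * cos (l i * 0)
  have hπ := sum_sq_mul_cosNormSq_le_integral hST hS fun i => a i * cos (l i * π)
  have hsq0 : ∀ i, (a i * cos (l i * 0)) ^ 2 = a i ^ 2 := by simp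
  have hsqπ : ∀ i, (a i * cos (l i * π)) ^ 2 = a i ^ 2 := fun i => by
    rw [mul_pow, cos_nat_mul_pi, ← pow_mul, pow_mul', neg_one_sq, one_pow, mul_one]
  simp only [hsq0, hsqπ] at h0 hπ
  have : π * ∑ i ∈ S, a i ^ 2
      ≤ ∑ i ∈ S, a i ^ 2 * cosNormSq (k i) + ∑ i ∈ S, a i ^ 2 * cosNormSq (k i) := by
    rw [Finset.mul_sum, ← Finset.sum_add_distrib]
    exact Finset.sum_le_sum fun i _ => by nlinarith [half_pi_le_cosNormSq (k i), sq_nonneg (a i)]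
  linarith

lemma integral_integral_sq_sum_cos_mul_cos (T : Finset (ℕ × ℕ)) (a : ℕ × ℕ → ℝ) :
    ∫ x in (0:ℝ)..π, ∫ y in (0:ℝ)..π, (∑ q ∈ T, a q * cos (q.1 * x) * cos (q.2 * y)) ^ 2
      = ∑ q ∈ T, a q ^ 2 * (cosNormSq q.1 * cosNormSq q.2) := by
  have hrow : ∀ n, Set.InjOn Prod.fst (T.filter (·.2 = n) : Set (ℕ × ℕ)) := fun n q hq q' hq' h =>
    Prod.ext h ((Finset.mem_filter.mp hq).2.trans (Finset.mem_filter.mp hq').2.symm)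
  have hinner : ∀ x : ℝ,
      ∫ y in (0:ℝ)..π, (∑ q ∈ T, a q * cos (q.1 * x) * cos (q.2 * y)) ^ 2
        = ∑ n ∈ T.image Prod.snd, (∑ q ∈ T with q.2 = n, a q * cos (q.1 * x)) ^ 2 * cosNormSq n :=
    fun x => integral_sq_sum_cos_eq_sum_fiber T Prod.snd fun q => a q * cos (q.1 * x)
  simp_rw [hinner]
  rw [intervalIntegral.integral_finsetSum fun n _ => Continuous.intervalIntegrable (by fun_prop) _ _,
    ← Finset.sum_fiberwise_of_maps_to fun q hq => Finset.mem_image_of_mem Prod.snd hq]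
  refine Finset.sum_congr rfl fun n _ => ?_
  rw [intervalIntegral.integral_mul_const, integral_sq_sum_cos_of_injOn (hrow n), Finset.sum_mul]
  refine Finset.sum_congr rfl fun q hq => ?_
  rw [(Finset.mem_filter.mp hq).2]
  ring

lemma eq_of_sqrt_sq_add_sq_mem_Icc {m m' n : ℕ} {s₀ δ : ℝ} (hδ : δ ≤ 1 / 8) (hnm : n ≤ m)
    (h : √((m:ℝ) ^ 2 + (n:ℝ) ^ 2) ∈ Set.Icc s₀ (s₀ + δ))
    (h' : √((m':ℝ) ^ 2 + (n:ℝ) ^ 2) ∈ Set.Icc s₀ (s₀ + δ)) : m' = m := by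
  by_contra hne
  set r := √((m:ℝ) ^ 2 + (n:ℝ) ^ 2)
  set r' := √((m':ℝ) ^ 2 + (n:ℝ) ^ 2)
  have hr : r ^ 2 = (m:ℝ) ^ 2 + (n:ℝ) ^ 2 := sq_sqrt (by positivity)
  have hr' : r' ^ 2 = (m':ℝ) ^ 2 + (n:ℝ) ^ 2 := sq_sqrt (by positivity)
  obtain ⟨hs₀, hδr⟩ := Set.mem_Icc.mp h
  obtain ⟨hs₀', hδr'⟩ := Set.mem_Icc.mp h'
  have hclose : |r - r'| ≤ δ := abs_sub_le_iff.mpr ⟨by linarith, by linarith⟩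
  have hδ0 : 0 ≤ δ := (abs_nonneg _).trans hclose
  have hsum : r + r' ≤ 4 * m + δ := by
    have hnm' : (n:ℝ) ≤ m := by exact_mod_cast hnm
    have hrm : r ≤ 2 * m := by nlinarith [sqrt_nonneg ((m:ℝ) ^ 2 + (n:ℝ) ^ 2)]
    linarith [(abs_sub_le_iff.mp hclose).2]
  have hgap : (m:ℝ) + m' ≤ |(m:ℝ) ^ 2 - (m':ℝ) ^ 2| := by
    rcases Nat.lt_or_gt_of_ne hne with hlt | hlt
    · have : (m':ℝ) + 1 ≤ m := by exact_mod_cast hlt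
      rw [abs_of_nonneg (by nlinarith)]; nlinarith
    · have : (m:ℝ) + 1 ≤ m' := by exact_mod_cast hlt
      rw [abs_of_nonpos (by nlinarith)]; nlinarith
  have hdiff : |(m:ℝ) ^ 2 - (m':ℝ) ^ 2| ≤ δ * (4 * m + δ) := by
    have hfactor : (m:ℝ) ^ 2 - (m':ℝ) ^ 2 = (r - r') * (r + r') := by linear_combination hr' - hr
    rw [hfactor, abs_mul, abs_of_nonneg (by positivity : 0 ≤ r + r')]
    exact mul_le_mul hclose hsum (by positivity) hδ0
  have hone : (1:ℝ) ≤ m + m' := by exact_mod_cast (by omega : 1 ≤ m + m')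
  nlinarith [Nat.cast_nonneg (α := ℝ) m']

lemma eq_of_snd_eq_of_mem_cluster {T : Finset (ℕ × ℕ)} {s₀ δ : ℝ} (hδ : δ ≤ 1 / 8)
    (hT : ∀ q ∈ T, √((q.1:ℝ) ^ 2 + (q.2:ℝ) ^ 2) ∈ Set.Icc s₀ (s₀ + δ)) {q : ℕ × ℕ} (hq : q ∈ T)
    (hle : q.2 ≤ q.1) : ∀ q' ∈ T, q'.2 = q.2 → q' = q := fun q' hq' h2 =>
  Prod.ext (eq_of_sqrt_sq_add_sq_mem_Icc hδ hle (hT q hq) (h2 ▸ hT q' hq')) h2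

lemma eq_of_fst_eq_of_mem_cluster {T : Finset (ℕ × ℕ)} {s₀ δ : ℝ} (hδ : δ ≤ 1 / 8)
    (hT : ∀ q ∈ T, √((q.1:ℝ) ^ 2 + (q.2:ℝ) ^ 2) ∈ Set.Icc s₀ (s₀ + δ)) {q : ℕ × ℕ} (hq : q ∈ T)
    (hle : q.1 ≤ q.2) : ∀ q' ∈ T, q'.1 = q.1 → q' = q := fun q' hq' h1 => by
  have hT' : ∀ q ∈ T, √((q.2:ℝ) ^ 2 + (q.1:ℝ) ^ 2) ∈ Set.Icc s₀ (s₀ + δ) := fun q hq => by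
    rw [add_comm ((q.2:ℝ) ^ 2)]; exact hT q hq
  exact Prod.ext h1 (eq_of_sqrt_sq_add_sq_mem_Icc hδ hle (hT' q hq) (h1 ▸ hT' q' hq'))

/-- boundary values of spectral clusters on the square, lower bound:
on `Q = (0,π)²`, there are `δ₀, c > 0` such that every `L²(Q)`-normalized spectral cluster
`p = Σ a_{m,n} cos(mx)cos(ny)` of width `δ ≤ δ₀` (all frequencies `√(m²+n²)` with nonzero
coefficient lying in an interval of length `δ`) satisfies `∫_{∂Q} |p|² dS ≥ c`. -/
theorem stmt_12 :
    ∃ δ₀ : ℝ, 0 < δ₀ ∧ ∃ c : ℝ, 0 < c ∧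
      ∀ δ : ℝ, 0 < δ → δ ≤ δ₀ →
      ∀ (A : Finset (ℕ × ℕ)) (a : ℕ × ℕ → ℝ) (s₀ : ℝ),
        (∀ mn ∈ A, a mn ≠ 0 →
          s₀ ≤ Real.sqrt ((mn.1 : ℝ)^2 + (mn.2 : ℝ)^2) ∧
          Real.sqrt ((mn.1 : ℝ)^2 + (mn.2 : ℝ)^2) ≤ s₀ + δ) →
        (∀ p : ℝ → ℝ → ℝ,
          (∀ x y : ℝ, p x y = ∑ mn ∈ A, a mn * Real.cos (mn.1 * x) * Real.cos (mn.2 * y)) →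
          (∫ x in (0:ℝ)..π, ∫ y in (0:ℝ)..π, (p x y)^2) = 1 →
          c ≤ (∫ y in (0:ℝ)..π, (p 0 y)^2 + (p π y)^2) +
              (∫ x in (0:ℝ)..π, (p x 0)^2 + (p x π)^2)) := by
  refine ⟨1 / 8, by norm_num, 1 / π, by positivity, fun δ _ hδ A a s₀ hfreq p hp hnorm => ?_⟩
  set T := A.filter (a · ≠ 0)
  have hT : ∀ q ∈ T, √((q.1:ℝ) ^ 2 + (q.2:ℝ) ^ 2) ∈ Set.Icc s₀ (s₀ + δ) := fun q hq =>
    hfreq q (Finset.mem_filter.mp hq).1 (Finset.mem_filter.mp hq).2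
  obtain rfl : p = fun x y => ∑ q ∈ T, a q * cos (q.1 * x) * cos (q.2 * y) := by
    refine funext₂ fun x y => (hp x y).trans (Finset.sum_filter_of_ne fun q _ h => ?_).symm
    contrapose! h
    simp [h]
  rw [integral_integral_sq_sum_cos_mul_cos] at hnorm
  have hvert := pi_mul_sum_sq_le_integral_opposite_edges (Finset.filter_subset (fun q => q.2 ≤ q.1) T)
    (fun q hq => eq_of_snd_eq_of_mem_cluster hδ hT (Finset.mem_filter.mp hq).1
      (Finset.mem_filter.mp hq).2) Prod.fst a
  have hhor := pi_mul_sum_sq_le_integral_opposite_edges (Finset.filter_subset (fun q => ¬ q.2 ≤ q.1) T)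
    (fun q hq => eq_of_fst_eq_of_mem_cluster hδ hT (Finset.mem_filter.mp hq).1
      (le_of_not_ge (Finset.mem_filter.mp hq).2)) Prod.snd a
  simp only [mul_right_comm (a _)] at hhor
  have hmass : 1 ≤ π ^ 2 * ∑ q ∈ T, a q ^ 2 := by
    rw [← hnorm, Finset.mul_sum]
    refine Finset.sum_le_sum fun q _ => ?_
    have := mul_le_mul (cosNormSq_le_pi q.1) (cosNormSq_le_pi q.2) (cosNormSq_nonneg _) pi_pos.le
    nlinarith [sq_nonneg (a q)]
  rw [← Finset.sum_filter_add_sum_filter_not T (fun q => q.2 ≤ q.1)] at hmass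
  rw [div_le_iff₀ pi_pos]
  nlinarith [pi_pos]
end

section
/- (Optimality of exponent 1/2 on the square) Let Q = (0,π)². For every ε > 0 small enough and every sufficiently large n₁ ∈ ℕ, the function p₁(x,y) = (2/√N) Σ_{m=0}^{N-1} cos(mx) cos(n₁y) with N = ⌈ε√n₁⌉ is L²(Q)-normalized up to a bounded factor, its Neumann frequencies √(m²+n₁²) all lie in an interval of length O(ε²), and ∫_{{0}×(0,π)} |p₁|² dy ≥ ε√n₁. -/
/-!
The cluster separates variables, `p₁(x,y) = (2/√N) S_N(x) cos(n₁ y)` with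
`S_N(x) = Σ_{m<N} cos(m x)`. Orthogonality of the cosines on `(0,π)` gives
`∫ S_N² = (N+1)π/2` (the constant mode has twice the weight), so `‖p₁‖² = π²(N+1)/N ∈ [π², 2π²]`.
On the edge `x = 0` every mode equals `1`, so `S_N(0) = N` and the edge mass is `2πN ≥ ε√n₁`.
The frequencies satisfy `√(m²+n₁²) - n₁ ≤ m²/(2n₁) ≤ ε²/2` because `m < ε√n₁`.
-/

open Real intervalIntegral Finset

theorem integral_cos_intCast_mul (k : ℤ) :
    ∫ x in (0:ℝ)..π, cos (k * x) = if k = 0 then π else 0 := by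
  split_ifs with hk
  · simp [hk]
  · rw [integral_comp_mul_left (fun x => cos x) (Int.cast_ne_zero.mpr hk)]
    simp [sin_int_mul_pi]

theorem integral_cos_natCast_mul_mul_cos (a b : ℕ) :
    ∫ x in (0:ℝ)..π, cos (a * x) * cos (b * x) =
      if a = b then (if a = 0 then π else π / 2) else 0 := by
  have h_prod : ∀ x : ℝ, cos (a * x) * cos (b * x) =
      (cos (((a - b : ℤ) : ℝ) * x) + cos (((a + b : ℤ) : ℝ) * x)) / 2 := fun x => by
    push_cast
    rw [sub_mul, add_mul, cos_sub, cos_add]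
    ring
  have h_int : ∀ c : ℝ, IntervalIntegrable (fun x => cos (c * x)) MeasureTheory.volume 0 π :=
    fun c => (by fun_prop : Continuous fun x => cos (c * x)).intervalIntegrable 0 π
  simp_rw [h_prod]
  rw [integral_div, integral_add (h_int _) (h_int _), integral_cos_intCast_mul,
    integral_cos_intCast_mul]
  by_cases hab : a = b
  · subst hab
    by_cases ha : a = 0 <;> simp [ha]
  · have h_sum : (a : ℤ) + b ≠ 0 := by omega
    simp [hab, sub_ne_zero.mpr (Int.ofNat_inj.not.mpr hab), h_sum]

theorem integral_cos_natCast_mul_sq {n : ℕ} (hn : n ≠ 0) :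
    ∫ y in (0:ℝ)..π, cos (n * y) ^ 2 = π / 2 := by
  simp_rw [sq]
  rw [integral_cos_natCast_mul_mul_cos, if_pos rfl, if_neg hn]

theorem integral_sum_range_cos_natCast_mul_sq {N : ℕ} (hN : N ≠ 0) :
    ∫ x in (0:ℝ)..π, (∑ m ∈ range N, cos (m * x)) ^ 2 = (N + 1) * π / 2 := by
  have h_row : ∀ m ∈ range N,
      ∫ x in (0:ℝ)..π, ∑ m' ∈ range N, cos (m * x) * cos (m' * x) =
        π / 2 + if m = 0 then π / 2 else 0 := fun m hm => by
    rw [integral_finsetSum fun (m' : ℕ) _ => (by fun_prop : Continuous fun x : ℝ =>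
      cos (m * x) * cos ((m' : ℝ) * x)).intervalIntegrable 0 π]
    simp_rw [integral_cos_natCast_mul_mul_cos]
    rw [sum_ite_eq, if_pos hm]
    split_ifs <;> ring
  simp_rw [sq, sum_mul_sum]
  rw [integral_finsetSum fun (m : ℕ) _ => (by fun_prop : Continuous fun x : ℝ =>
      ∑ m' ∈ range N, cos (m * x) * cos ((m' : ℝ) * x)).intervalIntegrable 0 π,
    sum_congr rfl h_row, sum_add_distrib, sum_const, card_range, sum_ite_eq',
    if_pos (mem_range.mpr (Nat.pos_of_ne_zero hN)), nsmul_eq_mul]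
  ring

theorem integral_integral_mul_cos_natCast_mul_sq (f : ℝ → ℝ) {n : ℕ} (hn : n ≠ 0) :
    ∫ x in (0:ℝ)..π, ∫ y in (0:ℝ)..π, (f x * cos (n * y)) ^ 2 =
      π / 2 * ∫ x in (0:ℝ)..π, f x ^ 2 := by
  simp_rw [mul_pow, integral_const_mul, integral_cos_natCast_mul_sq hn, integral_mul_const]
  ring

theorem sqrt_sq_add_sq_sub_le {m n : ℝ} (hn : 0 < n) :
    √(m ^ 2 + n ^ 2) - n ≤ m ^ 2 / (2 * n) := by
  suffices √(m ^ 2 + n ^ 2) ≤ n + m ^ 2 / (2 * n) by linarith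
  refine sqrt_le_iff.mpr ⟨by positivity, ?_⟩
  have : 0 ≤ (m ^ 2 / (2 * n)) ^ 2 := by positivity
  field_simp
  nlinarith

theorem sqrt_natCast_sq_add_sq_sub_le_sq {ε : ℝ} {m n : ℕ} (hn : n ≠ 0)
    (hm : m < ⌈ε * √n⌉₊) : √((m : ℝ) ^ 2 + (n : ℝ) ^ 2) - n ≤ ε ^ 2 := by
  have hn_pos : (0 : ℝ) < n := by positivity
  have hm_sq : (m : ℝ) ^ 2 ≤ ε ^ 2 * n := by
    have := pow_le_pow_left₀ (Nat.cast_nonneg m) (Nat.lt_ceil.mp hm).le 2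
    rwa [mul_pow, sq_sqrt hn_pos.le] at this
  calc √((m : ℝ) ^ 2 + (n : ℝ) ^ 2) - n ≤ (m : ℝ) ^ 2 / (2 * n) := sqrt_sq_add_sq_sub_le hn_pos
    _ ≤ ε ^ 2 * n / (2 * n) := by gcongr
    _ = ε ^ 2 / 2 := by field_simp
    _ ≤ ε ^ 2 := half_le_self (sq_nonneg ε)

/-- optimality of the exponent 1/2 on the square: for every small enough
`ε > 0` and every large enough `n₁`, the cluster
`p₁(x,y) = (2/√N) Σ_{m<N} cos(mx)cos(n₁y)` with `N = ⌈ε√n₁⌉` is `L²((0,π)²)`-normalized up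
to a bounded factor, its Neumann frequencies `√(m²+n₁²)` lie within `ε²` of `n₁`, and
`∫_{{0}×(0,π)} |p₁|² ≥ ε√n₁`. -/
theorem stmt_14 :
    ∃ ε₀ : ℝ, 0 < ε₀ ∧ ∃ C : ℝ, 0 < C ∧
      ∀ ε : ℝ, 0 < ε → ε ≤ ε₀ → ∃ n₀ : ℕ, ∀ n₁ : ℕ, n₀ ≤ n₁ →
        ∀ (N : ℕ) (p₁ : ℝ → ℝ → ℝ),
          N = ⌈ε * Real.sqrt n₁⌉₊ →
          (∀ x y : ℝ, p₁ x y =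
            (2 / Real.sqrt N) * ∑ m ∈ Finset.range N, Real.cos (m * x) * Real.cos (n₁ * y)) →
          (1 / C ≤ (∫ x in (0:ℝ)..π, ∫ y in (0:ℝ)..π, (p₁ x y)^2) ∧
            (∫ x in (0:ℝ)..π, ∫ y in (0:ℝ)..π, (p₁ x y)^2) ≤ C) ∧
          (∀ m : ℕ, m < N →
            Real.sqrt ((m : ℝ)^2 + (n₁ : ℝ)^2) - n₁ ≤ ε^2) ∧
          ε * Real.sqrt n₁ ≤ ∫ y in (0:ℝ)..π, (p₁ 0 y)^2 := by
  refine ⟨1, one_pos, 2 * π ^ 2, by positivity, fun ε hε _ => ⟨1, fun n₁ hn₁ N p₁ hN hp => ?_⟩⟩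
  have hn₁ : n₁ ≠ 0 := Nat.one_le_iff_ne_zero.mp hn₁
  have hN_pos : 0 < N := hN ▸ Nat.ceil_pos.mpr (by positivity)
  have hN_real : (0 : ℝ) < N := Nat.cast_pos.mpr hN_pos
  have hp_sep : ∀ x y, p₁ x y = (2 / √N * ∑ m ∈ range N, cos (m * x)) * cos (n₁ * y) := by
    intro x y
    rw [hp, mul_assoc, sum_mul]
  have h_coeff : (2 / √N) ^ 2 = 4 / N := by rw [div_pow, sq_sqrt hN_real.le]; norm_num
  have h_mass : ∫ x in (0:ℝ)..π, ∫ y in (0:ℝ)..π, p₁ x y ^ 2 = π ^ 2 * (N + 1) / N := by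
    simp_rw [hp_sep]
    rw [integral_integral_mul_cos_natCast_mul_sq _ hn₁]
    simp_rw [mul_pow, h_coeff]
    rw [integral_const_mul, integral_sum_range_cos_natCast_mul_sq hN_pos.ne']
    field_simp
    ring
  have h_edge : ∫ y in (0:ℝ)..π, p₁ 0 y ^ 2 = 2 * π * N := by
    simp_rw [hp_sep, mul_zero, cos_zero, sum_const, card_range, nsmul_one, mul_pow, h_coeff]
    rw [integral_const_mul, integral_cos_natCast_mul_sq hn₁]
    field_simp
    ring
  have hN_one : (1 : ℝ) ≤ N := Nat.one_le_cast.mpr hN_pos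
  have hπ_sq : 1 ≤ π ^ 2 := by nlinarith [pi_gt_three]
  refine ⟨⟨?_, ?_⟩, fun m hm => sqrt_natCast_sq_add_sq_sub_le_sq hn₁ (hN ▸ hm), ?_⟩
  · rw [h_mass, le_div_iff₀ hN_real]
    calc 1 / (2 * π ^ 2) * N ≤ 1 * N := by
          gcongr
          rw [div_le_one (by positivity)]
          linarith
      _ ≤ π ^ 2 * (N + 1) := by nlinarith
  · rw [h_mass, div_le_iff₀ hN_real]
    nlinarith
  · rw [h_edge]
    calc ε * √n₁ ≤ N := hN ▸ Nat.le_ceil _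
      _ ≤ 2 * π * N := le_mul_of_one_le_left hN_real.le (by linarith [pi_gt_three])
end
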